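/- arXiv:2109.09012 — 6 statements merged into one kernel-verified Lean document; each statement's English description precedes it below -/
import Mathlib

section
/- Let H be a complex Hilbert space, Ω a nonempty set, and k : Ω → H a family of unit vectors. For bounded operators A, B on H with B invertible, if ‖(A−B) k(λ)‖ ≤ r for all λ ∈ Ω (for some r > 0), then sup over λ of ‖A k(λ)‖ ≤ ‖B⁻¹‖ · (sup over λ of |⟨B* A k(λ), k(λ)⟩| + r²/2). -/
open ContinuousLinearMap

-- Expand `‖x - y‖² = ‖x‖² - 2 Re⟪x, y⟫ + ‖y‖²` and use `2‖x‖‖y‖ ≤ ‖x‖² + ‖y‖²`.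
theorem norm_mul_norm_le_norm_inner_add_norm_sub_sq {𝕜 E : Type*} [RCLike 𝕜]
    [NormedAddCommGroup E] [InnerProductSpace 𝕜 E] (x y : E) :
    ‖x‖ * ‖y‖ ≤ ‖(inner 𝕜 x y : 𝕜)‖ + ‖x - y‖ ^ 2 / 2 := by
  have hsq := @norm_sub_sq 𝕜 _ _ _ _ x y
  have hre : RCLike.re (inner 𝕜 x y : 𝕜) ≤ ‖(inner 𝕜 x y : 𝕜)‖ := RCLike.re_le_norm _
  nlinarith [sq_nonneg (‖x‖ - ‖y‖)]

theorem ContinuousLinearMap.norm_le_opNorm_mul_norm_apply_of_comp_eq_id {𝕜 E F : Type*}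
    [NontriviallyNormedField 𝕜] [NormedAddCommGroup E] [NormedSpace 𝕜 E]
    [NormedAddCommGroup F] [NormedSpace 𝕜 F] {B : E →L[𝕜] F} {Binv : F →L[𝕜] E}
    (hB : Binv.comp B = ContinuousLinearMap.id 𝕜 E) (x : E) :
    ‖x‖ ≤ ‖Binv‖ * ‖B x‖ := by
  have hx : Binv (B x) = x := by simpa using congrArg (fun T : E →L[𝕜] E => T x) hB
  simpa only [hx] using Binv.le_opNorm (B x)

theorem ContinuousLinearMap.bddAbove_range_norm_inner_apply {𝕜 E ι : Type*} [RCLike 𝕜]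
    [NormedAddCommGroup E] [InnerProductSpace 𝕜 E] (T : E →L[𝕜] E) {k : ι → E}
    (hk : ∀ l, ‖k l‖ ≤ 1) :
    BddAbove (Set.range fun l => ‖(inner 𝕜 (T (k l)) (k l) : 𝕜)‖) := by
  refine ⟨‖T‖, ?_⟩
  rintro _ ⟨l, rfl⟩
  calc ‖(inner 𝕜 (T (k l)) (k l) : 𝕜)‖ ≤ ‖T (k l)‖ * ‖k l‖ := norm_inner_le_norm _ _
    _ ≤ ‖T‖ * ‖k l‖ * 1 := by gcongr; exacts [T.le_opNorm _, hk l]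
    _ ≤ ‖T‖ := by nlinarith [norm_nonneg T, norm_nonneg (k l), hk l]

theorem ContinuousLinearMap.norm_apply_le_of_comp_eq_id {H : Type*} [NormedAddCommGroup H]
    [InnerProductSpace ℂ H] [CompleteSpace H] {A B Binv : H →L[ℂ] H}
    (hB : Binv.comp B = ContinuousLinearMap.id ℂ H) {x : H} (hx : ‖x‖ = 1) :
    ‖A x‖ ≤ ‖Binv‖ * (‖(inner ℂ (adjoint B (A x)) x : ℂ)‖ + ‖(A - B) x‖ ^ 2 / 2) := by
  have hBx : 1 ≤ ‖Binv‖ * ‖B x‖ := hx ▸ norm_le_opNorm_mul_norm_apply_of_comp_eq_id hB x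
  calc ‖A x‖ ≤ ‖A x‖ * (‖Binv‖ * ‖B x‖) := le_mul_of_one_le_right (norm_nonneg _) hBx
    _ = ‖Binv‖ * (‖A x‖ * ‖B x‖) := by ring
    _ ≤ ‖Binv‖ * (‖(inner ℂ (adjoint B (A x)) x : ℂ)‖ + ‖(A - B) x‖ ^ 2 / 2) := by
      rw [adjoint_inner_left, sub_apply]
      gcongr
      exact norm_mul_norm_le_norm_inner_add_norm_sub_sq _ _

open ContinuousLinearMap in
theorem stmt_0_general {H : Type*} [NormedAddCommGroup H] [InnerProductSpace ℂ H] [CompleteSpace H]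
    {Ω : Type*} (k : Ω → H) (hk : ∀ l, ‖k l‖ = 1)
    (A B Binv : H →L[ℂ] H)
    (hB2 : Binv.comp B = ContinuousLinearMap.id ℂ H)
    (r : ℝ) (h : ∀ l, ‖(A - B) (k l)‖ ≤ r) :
    (⨆ l, ‖A (k l)‖) ≤
      ‖Binv‖ * ((⨆ l, ‖(inner ℂ ((adjoint B) (A (k l))) (k l) : ℂ)‖) + r ^ 2 / 2) := by
  have hbdd := ((adjoint B).comp A).bddAbove_range_norm_inner_apply fun l => (hk l).le
  have hsup_nonneg : 0 ≤ ⨆ l, ‖(inner ℂ ((adjoint B) (A (k l))) (k l) : ℂ)‖ :=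
    Real.iSup_nonneg fun _ => norm_nonneg _
  refine Real.iSup_le (fun l => ?_) (by positivity)
  calc ‖A (k l)‖
      ≤ ‖Binv‖ * (‖(inner ℂ (adjoint B (A (k l))) (k l) : ℂ)‖ + ‖(A - B) (k l)‖ ^ 2 / 2) :=
        norm_apply_le_of_comp_eq_id hB2 (hk l)
    _ ≤ ‖Binv‖ * ((⨆ l, ‖(inner ℂ ((adjoint B) (A (k l))) (k l) : ℂ)‖) + r ^ 2 / 2) := by
        gcongr
        · exact le_ciSup hbdd l
        · exact h l

open ContinuousLinearMap in
theorem stmt_0 {H : Type*} [NormedAddCommGroup H] [InnerProductSpace ℂ H] [CompleteSpace H]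
    {Ω : Type*} [Nonempty Ω] (k : Ω → H) (hk : ∀ l, ‖k l‖ = 1)
    (A B Binv : H →L[ℂ] H)
    (hB1 : B.comp Binv = ContinuousLinearMap.id ℂ H)
    (hB2 : Binv.comp B = ContinuousLinearMap.id ℂ H)
    (r : ℝ) (hr : 0 < r) (h : ∀ l, ‖(A - B) (k l)‖ ≤ r) :
    (⨆ l, ‖A (k l)‖) ≤
      ‖Binv‖ * ((⨆ l, ‖(inner ℂ ((adjoint B) (A (k l))) (k l) : ℂ)‖) + r ^ 2 / 2) :=
  stmt_0_general k hk A B Binv hB2 r h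
end

section
/- Let H be a complex Hilbert space, Ω nonempty, k : Ω → H unit vectors, A a bounded operator on H, μ a nonzero complex number, r > 0. If ‖(A − μ·I) k(λ)‖ ≤ r for all λ ∈ Ω, then 0 ≤ (sup_λ ‖A k(λ)‖) − (sup_λ |⟨A k(λ), k(λ)⟩|) ≤ r² / (2|μ|). -/
open scoped InnerProductSpace

section

variable {𝕜 E : Type*} [RCLike 𝕜] [NormedAddCommGroup E] [InnerProductSpace 𝕜 E]

/-- Expanding `‖y - μ x‖²`, this is AM-GM `2 ‖μ‖ ‖y‖ ≤ ‖y‖² + ‖μ‖²` plus `re ⟪y, μ x⟫ ≤ ‖μ‖ ‖⟪y, x⟫‖`. -/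
theorem two_mul_norm_mul_sub_norm_inner_le_norm_sub_smul_sq {x : E} (hx : ‖x‖ = 1)
    (y : E) (μ : 𝕜) : 2 * ‖μ‖ * (‖y‖ - ‖⟪y, x⟫_𝕜‖) ≤ ‖y - μ • x‖ ^ 2 := by
  have hexpand : ‖y - μ • x‖ ^ 2 = ‖y‖ ^ 2 - 2 * RCLike.re ⟪y, μ • x⟫_𝕜 + ‖μ‖ ^ 2 := by
    rw [norm_sub_sq (𝕜 := 𝕜), norm_smul, hx, mul_one]
  have hre : RCLike.re ⟪y, μ • x⟫_𝕜 ≤ ‖μ‖ * ‖⟪y, x⟫_𝕜‖ := by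
    simpa only [inner_smul_right, norm_mul] using RCLike.re_le_norm ⟪y, μ • x⟫_𝕜
  nlinarith [sq_nonneg (‖y‖ - ‖μ‖)]

theorem norm_sub_norm_inner_le_of_norm_sub_smul_le {x : E} (hx : ‖x‖ = 1) {y : E} {μ : 𝕜}
    (hμ : μ ≠ 0) {r : ℝ} (hr : ‖y - μ • x‖ ≤ r) : ‖y‖ - ‖⟪y, x⟫_𝕜‖ ≤ r ^ 2 / (2 * ‖μ‖) := by
  rw [le_div_iff₀ (by positivity), mul_comm]
  calc 2 * ‖μ‖ * (‖y‖ - ‖⟪y, x⟫_𝕜‖) ≤ ‖y - μ • x‖ ^ 2 :=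
        two_mul_norm_mul_sub_norm_inner_le_norm_sub_smul_sq hx y μ
    _ ≤ r ^ 2 := pow_le_pow_left₀ (norm_nonneg _) hr 2

end

theorem stmt_1_general {H : Type*} [NormedAddCommGroup H] [InnerProductSpace ℂ H]
    {Ω : Type*} [Nonempty Ω] (k : Ω → H) (hk : ∀ l, ‖k l‖ = 1)
    (A : H →L[ℂ] H) (μ : ℂ) (hμ : μ ≠ 0) (r : ℝ)
    (h : ∀ l, ‖(A - μ • ContinuousLinearMap.id ℂ H) (k l)‖ ≤ r) :
    0 ≤ (⨆ l, ‖A (k l)‖) - (⨆ l, ‖(inner ℂ (A (k l)) (k l) : ℂ)‖) ∧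
      (⨆ l, ‖A (k l)‖) - (⨆ l, ‖(inner ℂ (A (k l)) (k l) : ℂ)‖) ≤ r ^ 2 / (2 * ‖μ‖) := by
  have hinner_le : ∀ l, ‖⟪A (k l), k l⟫_ℂ‖ ≤ ‖A (k l)‖ := fun l => by
    simpa only [hk l, mul_one] using norm_inner_le_norm (𝕜 := ℂ) (A (k l)) (k l)
  have hnorm_le : ∀ l, ‖A (k l)‖ ≤ ‖A‖ := fun l => by
    simpa only [hk l, mul_one] using A.le_opNorm (k l)
  have hbdd : BddAbove (Set.range fun l => ‖A (k l)‖) := ⟨‖A‖, Set.forall_mem_range.2 hnorm_le⟩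
  have hbdd_inner : BddAbove (Set.range fun l => ‖⟪A (k l), k l⟫_ℂ‖) :=
    ⟨‖A‖, Set.forall_mem_range.2 fun l => (hinner_le l).trans (hnorm_le l)⟩
  refine ⟨sub_nonneg.2 (ciSup_mono hbdd hinner_le), sub_le_iff_le_add.2 (ciSup_le fun l => ?_)⟩
  have hkey := norm_sub_norm_inner_le_of_norm_sub_smul_le (hk l) hμ (y := A (k l))
    (by simpa using h l)
  linarith [le_ciSup hbdd_inner l]

theorem stmt_1 {H : Type*} [NormedAddCommGroup H] [InnerProductSpace ℂ H] [CompleteSpace H]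
    {Ω : Type*} [Nonempty Ω] (k : Ω → H) (hk : ∀ l, ‖k l‖ = 1)
    (A : H →L[ℂ] H) (μ : ℂ) (hμ : μ ≠ 0) (r : ℝ) (hr : 0 < r)
    (h : ∀ l, ‖(A - μ • ContinuousLinearMap.id ℂ H) (k l)‖ ≤ r) :
    0 ≤ (⨆ l, ‖A (k l)‖) - (⨆ l, ‖(inner ℂ (A (k l)) (k l) : ℂ)‖) ∧
      (⨆ l, ‖A (k l)‖) - (⨆ l, ‖(inner ℂ (A (k l)) (k l) : ℂ)‖) ≤ r ^ 2 / (2 * ‖μ‖) :=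
  stmt_1_general k hk A μ hμ r h
end

section
/- Let H be a complex Hilbert space, Ω nonempty, k : Ω → H unit vectors, and A, B bounded operators on H. If for some C > 0 one has ⟨B*B k(λ), k(λ)⟩ ≥ C for all λ ∈ Ω, and ‖(A−B) k(λ)‖ ≤ r for all λ (r > 0), then sup_λ ‖A k(λ)‖ ≤ (1/√C) · (sup_λ |⟨B* A k(λ), k(λ)⟩| + r²/2). -/
/-!
For each `λ`, `‖A kλ‖ ‖B kλ‖ ≤ |⟨A kλ, B kλ⟩| + ‖(A - B) kλ‖² / 2`, which is the polarization
identity `‖x - y‖² = ‖x‖² + ‖y‖² - 2 Re ⟨x, y⟩` combined with `2‖x‖‖y‖ ≤ ‖x‖² + ‖y‖²`.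
Since `‖B kλ‖² = ⟨B*B kλ, kλ⟩ ≥ C`, dividing by `‖B kλ‖ ≥ √C` and taking the supremum gives
the bound.
-/

open ContinuousLinearMap

section InnerProductSpace

variable {𝕜 E : Type*} [RCLike 𝕜] [NormedAddCommGroup E] [InnerProductSpace 𝕜 E]

theorem norm_mul_norm_le_norm_inner_add_norm_sub_sq_div_two (x y : E) :
    ‖x‖ * ‖y‖ ≤ ‖(inner 𝕜 x y : 𝕜)‖ + ‖x - y‖ ^ 2 / 2 := by
  have hpol := norm_sub_sq (𝕜 := 𝕜) x y
  have hre : RCLike.re (inner 𝕜 x y : 𝕜) ≤ ‖(inner 𝕜 x y : 𝕜)‖ := RCLike.re_le_norm _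
  nlinarith [sq_nonneg (‖x‖ - ‖y‖)]

theorem bddAbove_range_norm_inner_apply_self {ι : Type*} (T : E →L[𝕜] E) (k : ι → E)
    (hk : ∀ i, ‖k i‖ = 1) : BddAbove (Set.range fun i => ‖(inner 𝕜 (T (k i)) (k i) : 𝕜)‖) := by
  refine ⟨‖T‖, ?_⟩
  rintro _ ⟨i, rfl⟩
  calc ‖(inner 𝕜 (T (k i)) (k i) : 𝕜)‖ ≤ ‖T (k i)‖ * ‖k i‖ := norm_inner_le_norm _ _
    _ ≤ ‖T‖ := by simpa [hk i] using T.le_opNorm (k i)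

variable [CompleteSpace E]

theorem ContinuousLinearMap.sqrt_le_norm_apply_of_le_re_inner_adjoint_apply (B : E →L[𝕜] E)
    {C : ℝ} {x : E} (hC : C ≤ RCLike.re (inner 𝕜 (adjoint B (B x)) x : 𝕜)) :
    Real.sqrt C ≤ ‖B x‖ := by
  rw [apply_norm_eq_sqrt_inner_adjoint_left]
  exact Real.sqrt_le_sqrt hC

end InnerProductSpace

open ContinuousLinearMap in
theorem stmt_2_general {H : Type*} [NormedAddCommGroup H] [InnerProductSpace ℂ H] [CompleteSpace H]
    {Ω : Type*} (k : Ω → H) (hk : ∀ l, ‖k l‖ = 1)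
    (A B : H →L[ℂ] H) (C : ℝ) (hC : 0 < C)
    (hBC : ∀ l, C ≤ (inner ℂ ((adjoint B) (B (k l))) (k l) : ℂ).re)
    (r : ℝ) (h : ∀ l, ‖(A - B) (k l)‖ ≤ r) :
    (⨆ l, ‖A (k l)‖) ≤
      (1 / Real.sqrt C) * ((⨆ l, ‖(inner ℂ ((adjoint B) (A (k l))) (k l) : ℂ)‖) + r ^ 2 / 2) := by
  set M := ⨆ l, ‖(inner ℂ ((adjoint B) (A (k l))) (k l) : ℂ)‖
  have hbdd := bddAbove_range_norm_inner_apply_self (adjoint B ∘L A) k hk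
  have hM : 0 ≤ M := Real.iSup_nonneg fun _ => norm_nonneg _
  have hsqrtC : 0 < Real.sqrt C := Real.sqrt_pos.mpr hC
  refine Real.iSup_le (fun l => ?_) (by positivity)
  rw [one_div, inv_mul_eq_div, le_div_iff₀ hsqrtC]
  calc ‖A (k l)‖ * Real.sqrt C ≤ ‖A (k l)‖ * ‖B (k l)‖ :=
        mul_le_mul_of_nonneg_left (B.sqrt_le_norm_apply_of_le_re_inner_adjoint_apply (hBC l))
          (norm_nonneg _)
    _ ≤ ‖(inner ℂ (A (k l)) (B (k l)) : ℂ)‖ + ‖A (k l) - B (k l)‖ ^ 2 / 2 :=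
        norm_mul_norm_le_norm_inner_add_norm_sub_sq_div_two _ _
    _ ≤ M + r ^ 2 / 2 := by
        rw [← adjoint_inner_left, ← sub_apply]
        gcongr
        · exact le_ciSup hbdd l
        · exact h l

open ContinuousLinearMap in
theorem stmt_2 {H : Type*} [NormedAddCommGroup H] [InnerProductSpace ℂ H] [CompleteSpace H]
    {Ω : Type*} [Nonempty Ω] (k : Ω → H) (hk : ∀ l, ‖k l‖ = 1)
    (A B : H →L[ℂ] H) (C : ℝ) (hC : 0 < C)
    (hBC : ∀ l, C ≤ (inner ℂ ((adjoint B) (B (k l))) (k l) : ℂ).re)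
    (r : ℝ) (hr : 0 < r) (h : ∀ l, ‖(A - B) (k l)‖ ≤ r) :
    (⨆ l, ‖A (k l)‖) ≤
      (1 / Real.sqrt C) * ((⨆ l, ‖(inner ℂ ((adjoint B) (A (k l))) (k l) : ℂ)‖) + r ^ 2 / 2) :=
  stmt_2_general k hk A B C hC hBC r h
end

section
/- Let H be a complex Hilbert space, Ω nonempty, k : Ω → H unit vectors, A, B bounded operators with B invertible, r > 0, and suppose ‖(A−B) k(λ)‖ ≤ r for all λ ∈ Ω. Then (sup_λ ‖A k(λ)‖) · ‖B‖ ≤ sup_λ |⟨B* A k(λ), k(λ)⟩| + (1/2)(r² + ‖B‖² − ‖B⁻¹‖⁻²). -/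
/-!
For a unit vector `x`, AM–GM gives `‖A x‖ ‖B‖ ≤ (‖A x‖² + ‖B‖²) / 2`, and expanding
`‖(A - B) x‖² = ‖A x‖² - 2 Re ⟪A x, B x⟫ + ‖B x‖²` turns the right-hand side into
`Re ⟪B* A x, x⟫ + (‖(A - B) x‖² + ‖B‖² - ‖B x‖²) / 2`. Now `‖(A - B) x‖ ≤ r` and
`‖B x‖ ≥ ‖B⁻¹‖⁻¹`; taking suprema over `x = k λ` gives the claim.
-/

theorem norm_mul_le_re_inner_add {𝕜 E : Type*} [RCLike 𝕜] [NormedAddCommGroup E]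
    [InnerProductSpace 𝕜 E] (a b : E) (β : ℝ) :
    ‖a‖ * β ≤ RCLike.re (inner 𝕜 a b) + (1 / 2) * (‖a - b‖ ^ 2 + β ^ 2 - ‖b‖ ^ 2) := by
  rw [@norm_sub_sq 𝕜]
  linarith [two_mul_le_add_sq ‖a‖ β]

theorem ContinuousLinearMap.inv_norm_mul_norm_le_of_comp_eq_id {𝕜 E F : Type*}
    [NontriviallyNormedField 𝕜] [SeminormedAddCommGroup E] [NormedSpace 𝕜 E]
    [SeminormedAddCommGroup F] [NormedSpace 𝕜 F] {B : E →L[𝕜] F} {C : F →L[𝕜] E}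
    (hCB : C.comp B = ContinuousLinearMap.id 𝕜 E) (x : E) : ‖C‖⁻¹ * ‖x‖ ≤ ‖B x‖ := by
  have hx : ‖x‖ ≤ ‖C‖ * ‖B x‖ := by
    simpa [← comp_apply, hCB] using C.le_opNorm (B x)
  rcases (norm_nonneg C).eq_or_lt with hC | hC
  · simp [← hC]
  · rw [inv_mul_le_iff₀ hC]
    exact hx

theorem ContinuousLinearMap.norm_inner_apply_le_of_norm_eq_one {𝕜 E : Type*} [RCLike 𝕜]
    [NormedAddCommGroup E] [InnerProductSpace 𝕜 E] (T : E →L[𝕜] E) {x : E} (hx : ‖x‖ = 1) :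
    ‖(inner 𝕜 (T x) x : 𝕜)‖ ≤ ‖T‖ := by
  simpa [hx] using (norm_inner_le_norm (𝕜 := 𝕜) (T x) x).trans
    (mul_le_mul_of_nonneg_right (T.le_opNorm x) (norm_nonneg x))

theorem Real.iSup_mul_le_iSup_add {ι : Type*} [Nonempty ι] {f g : ι → ℝ} {c d : ℝ}
    (hc : 0 ≤ c) (hg : BddAbove (Set.range g)) (h : ∀ i, f i * c ≤ g i + d) :
    (⨆ i, f i) * c ≤ (⨆ i, g i) + d := by
  rw [Real.iSup_mul_of_nonneg hc]
  exact ciSup_le fun i => (h i).trans (add_le_add_left (le_ciSup hg i) d)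

open ContinuousLinearMap in
theorem stmt_3_general {H : Type*} [NormedAddCommGroup H] [InnerProductSpace ℂ H] [CompleteSpace H]
    {Ω : Type*} [Nonempty Ω] (k : Ω → H) (hk : ∀ l, ‖k l‖ = 1)
    (A B Binv : H →L[ℂ] H)
    (hB2 : Binv.comp B = ContinuousLinearMap.id ℂ H)
    (r : ℝ) (h : ∀ l, ‖(A - B) (k l)‖ ≤ r) :
    (⨆ l, ‖A (k l)‖) * ‖B‖ ≤
      (⨆ l, ‖(inner ℂ ((adjoint B) (A (k l))) (k l) : ℂ)‖) +
        (1 / 2) * (r ^ 2 + ‖B‖ ^ 2 - (‖Binv‖⁻¹) ^ 2) := by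
  refine Real.iSup_mul_le_iSup_add (norm_nonneg B)
    ⟨‖adjoint B * A‖, Set.forall_mem_range.2 fun l =>
      (adjoint B * A).norm_inner_apply_le_of_norm_eq_one (hk l)⟩ fun l => ?_
  have hBk : ‖Binv‖⁻¹ ≤ ‖B (k l)‖ := by
    simpa [hk l] using inv_norm_mul_norm_le_of_comp_eq_id hB2 (k l)
  have hAB : ‖A (k l) - B (k l)‖ ^ 2 ≤ r ^ 2 := by
    have := h l
    rw [sub_apply] at this
    gcongr
  have hre : RCLike.re (inner ℂ (A (k l)) (B (k l))) ≤
      ‖(inner ℂ ((adjoint B) (A (k l))) (k l) : ℂ)‖ := by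
    rw [adjoint_inner_left]
    exact RCLike.re_le_norm _
  have hBk2 : ‖Binv‖⁻¹ ^ 2 ≤ ‖B (k l)‖ ^ 2 := by gcongr
  linarith [norm_mul_le_re_inner_add (𝕜 := ℂ) (A (k l)) (B (k l)) ‖B‖]

open ContinuousLinearMap in
theorem stmt_3 {H : Type*} [NormedAddCommGroup H] [InnerProductSpace ℂ H] [CompleteSpace H]
    {Ω : Type*} [Nonempty Ω] (k : Ω → H) (hk : ∀ l, ‖k l‖ = 1)
    (A B Binv : H →L[ℂ] H)
    (hB1 : B.comp Binv = ContinuousLinearMap.id ℂ H)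
    (hB2 : Binv.comp B = ContinuousLinearMap.id ℂ H)
    (r : ℝ) (hr : 0 < r) (h : ∀ l, ‖(A - B) (k l)‖ ≤ r) :
    (⨆ l, ‖A (k l)‖) * ‖B‖ ≤
      (⨆ l, ‖(inner ℂ ((adjoint B) (A (k l))) (k l) : ℂ)‖) +
        (1 / 2) * (r ^ 2 + ‖B‖ ^ 2 - (‖Binv‖⁻¹) ^ 2) :=
  stmt_3_general k hk A B Binv hB2 r h
end

section
/- Let H be a complex Hilbert space, Ω nonempty, k : Ω → H unit vectors, A, B bounded operators with B invertible, and r > 0 with r < ‖B‖. If ‖(A−B) k(λ)‖ ≤ r for all λ ∈ Ω, then sup_λ ‖A k(λ)‖ ≤ (1/√(‖B‖² − r²)) · ( sup_λ |⟨B* A k(λ), k(λ)⟩| + (1/2)(‖B‖² − ‖B⁻¹‖⁻²) ). -/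
/-!
Write `u = A k(λ)` and `v = B k(λ)`. Expanding `‖u - v‖² ≤ r²` bounds `‖u‖² + ‖v‖²` by
`2 Re ⟨u, v⟩ + r²`, and `2 ‖u‖ s ≤ ‖u‖² + s²` with `s² = ‖B‖² - r²` turns this into
`‖u‖ s ≤ |⟨u, v⟩| + (‖B‖² - ‖v‖²) / 2`. Finally `⟨u, v⟩ = ⟨B* A k(λ), k(λ)⟩`, and
`‖v‖ ≥ ‖B⁻¹‖⁻¹` since `k(λ) = B⁻¹ v` is a unit vector.
-/

open ContinuousLinearMap

theorem inv_norm_mul_norm_le_norm_apply_of_comp_eq_id {𝕜 E F : Type*}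
    [NontriviallyNormedField 𝕜] [SeminormedAddCommGroup E] [SeminormedAddCommGroup F]
    [NormedSpace 𝕜 E] [NormedSpace 𝕜 F] {B : E →L[𝕜] F} {C : F →L[𝕜] E}
    (hCB : C.comp B = ContinuousLinearMap.id 𝕜 E) (x : E) :
    ‖C‖⁻¹ * ‖x‖ ≤ ‖B x‖ := by
  rcases (norm_nonneg C).eq_or_lt with hC | hC
  · simp [← hC]
  rw [inv_mul_le_iff₀ hC]
  calc ‖x‖ = ‖C (B x)‖ := by rw [← comp_apply, hCB, id_apply]
    _ ≤ ‖C‖ * ‖B x‖ := C.le_opNorm _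

section InnerProductSpace

variable {𝕜 E : Type*} [RCLike 𝕜] [SeminormedAddCommGroup E] [InnerProductSpace 𝕜 E]

theorem two_mul_norm_mul_le_of_norm_sub_le {u v : E} {r : ℝ} (huv : ‖u - v‖ ≤ r) (s : ℝ) :
    2 * (‖u‖ * s) ≤ 2 * RCLike.re (inner 𝕜 u v) + s ^ 2 + r ^ 2 - ‖v‖ ^ 2 := by
  have hsq : ‖u - v‖ ^ 2 ≤ r ^ 2 := pow_le_pow_left₀ (norm_nonneg _) huv 2
  rw [norm_sub_sq (𝕜 := 𝕜)] at hsq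
  nlinarith [sq_nonneg (‖u‖ - s)]

theorem norm_mul_sqrt_le_of_norm_sub_le {u v : E} {r b m : ℝ} (huv : ‖u - v‖ ≤ r) (hrb : r ≤ b)
    (hm : 0 ≤ m) (hmv : m ≤ ‖v‖) :
    ‖u‖ * Real.sqrt (b ^ 2 - r ^ 2) ≤ ‖(inner 𝕜 u v : 𝕜)‖ + 1 / 2 * (b ^ 2 - m ^ 2) := by
  have hr : 0 ≤ r := (norm_nonneg _).trans huv
  have hs : Real.sqrt (b ^ 2 - r ^ 2) ^ 2 = b ^ 2 - r ^ 2 :=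
    Real.sq_sqrt (by nlinarith)
  have key := two_mul_norm_mul_le_of_norm_sub_le (𝕜 := 𝕜) huv (Real.sqrt (b ^ 2 - r ^ 2))
  nlinarith [RCLike.re_le_norm (inner 𝕜 u v), pow_le_pow_left₀ hm hmv 2]

theorem norm_inner_apply_self_le_opNorm (T : E →L[𝕜] E) {x : E} (hx : ‖x‖ = 1) :
    ‖(inner 𝕜 (T x) x : 𝕜)‖ ≤ ‖T‖ := by
  calc ‖(inner 𝕜 (T x) x : 𝕜)‖ ≤ ‖T x‖ * ‖x‖ := norm_inner_le_norm _ _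
    _ ≤ ‖T‖ := by simpa [hx] using T.le_opNorm x

end InnerProductSpace

theorem stmt_4_general {H : Type*} [NormedAddCommGroup H] [InnerProductSpace ℂ H] [CompleteSpace H]
    {Ω : Type*} [Nonempty Ω] (k : Ω → H) (hk : ∀ l, ‖k l‖ = 1)
    (A B Binv : H →L[ℂ] H)
    (hB2 : Binv.comp B = ContinuousLinearMap.id ℂ H)
    (r : ℝ) (hrB : r < ‖B‖)
    (h : ∀ l, ‖(A - B) (k l)‖ ≤ r) :
    (⨆ l, ‖A (k l)‖) ≤
      (1 / Real.sqrt (‖B‖ ^ 2 - r ^ 2)) *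
        ((⨆ l, ‖(inner ℂ ((adjoint B) (A (k l))) (k l) : ℂ)‖) +
          (1 / 2) * (‖B‖ ^ 2 - (‖Binv‖⁻¹) ^ 2)) := by
  have hr : 0 ≤ r := (norm_nonneg _).trans (h (Classical.arbitrary Ω))
  have hs : 0 < Real.sqrt (‖B‖ ^ 2 - r ^ 2) := Real.sqrt_pos.mpr (by nlinarith)
  have hbdd : BddAbove (Set.range fun l => ‖(inner ℂ ((adjoint B) (A (k l))) (k l) : ℂ)‖) :=
    ⟨‖(adjoint B).comp A‖, Set.forall_mem_range.mpr fun l =>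
      norm_inner_apply_self_le_opNorm ((adjoint B).comp A) (hk l)⟩
  refine ciSup_le fun l => ?_
  rw [one_div, inv_mul_eq_div, le_div_iff₀ hs]
  have hBk : ‖Binv‖⁻¹ ≤ ‖B (k l)‖ := by
    simpa [hk l] using inv_norm_mul_norm_le_norm_apply_of_comp_eq_id hB2 (k l)
  calc ‖A (k l)‖ * Real.sqrt (‖B‖ ^ 2 - r ^ 2)
      ≤ ‖(inner ℂ (A (k l)) (B (k l)) : ℂ)‖ + 1 / 2 * (‖B‖ ^ 2 - ‖Binv‖⁻¹ ^ 2) :=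
        norm_mul_sqrt_le_of_norm_sub_le (by simpa using h l) hrB.le (by positivity) hBk
    _ ≤ _ := by
        rw [← adjoint_inner_left]
        gcongr
        exact le_ciSup hbdd l

open ContinuousLinearMap in
theorem stmt_4 {H : Type*} [NormedAddCommGroup H] [InnerProductSpace ℂ H] [CompleteSpace H]
    {Ω : Type*} [Nonempty Ω] (k : Ω → H) (hk : ∀ l, ‖k l‖ = 1)
    (A B Binv : H →L[ℂ] H)
    (hB1 : B.comp Binv = ContinuousLinearMap.id ℂ H)
    (hB2 : Binv.comp B = ContinuousLinearMap.id ℂ H)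
    (r : ℝ) (hr : 0 < r) (hrB : r < ‖B‖)
    (h : ∀ l, ‖(A - B) (k l)‖ ≤ r) :
    (⨆ l, ‖A (k l)‖) ≤
      (1 / Real.sqrt (‖B‖ ^ 2 - r ^ 2)) *
        ((⨆ l, ‖(inner ℂ ((adjoint B) (A (k l))) (k l) : ℂ)‖) +
          (1 / 2) * (‖B‖ ^ 2 - (‖Binv‖⁻¹) ^ 2)) :=
  stmt_4_general k hk A B Binv hB2 r hrB h
end

section
/- Let H be a complex Hilbert space, Ω nonempty, k : Ω → H unit vectors, A a bounded operator, μ ∈ ℂ, r > 0 with r < |μ|. If ‖(A − μ·I) k(λ)‖ ≤ r for all λ ∈ Ω, then sup_λ ‖A k(λ)‖ ≤ (sup_λ |⟨A k(λ), k(λ)⟩|) / √(1 − (r/|μ|)²). -/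
/-!
Expanding `‖A x - μ x‖² ≤ r²` for a unit vector `x` gives
`‖A x‖² + (|μ|² - r²) ≤ 2 Re (μ̄ ⟨A x, x⟩) ≤ 2 |μ| |⟨A x, x⟩|`, and by AM-GM the left side is at least
`2 ‖A x‖ √(|μ|² - r²)`. Dividing by `|μ|` and taking suprema over `λ` gives the bound.
-/

open RCLike

section

variable {𝕜 E : Type*} [RCLike 𝕜] [NormedAddCommGroup E] [InnerProductSpace 𝕜 E]

theorem norm_mul_sqrt_sq_sub_sq_le_norm_mul_norm_inner {v x : E} {μ : 𝕜} {r : ℝ}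
    (hx : ‖x‖ = 1) (hv : ‖v - μ • x‖ ≤ r) :
    ‖v‖ * √(‖μ‖ ^ 2 - r ^ 2) ≤ ‖μ‖ * ‖inner 𝕜 v x‖ := by
  rcases le_total (‖μ‖ ^ 2 - r ^ 2) 0 with hneg | hpos
  · rw [Real.sqrt_eq_zero'.mpr hneg, mul_zero]
    positivity
  have hexpand : ‖v - μ • x‖ ^ 2 = ‖v‖ ^ 2 - 2 * re (inner 𝕜 v (μ • x)) + ‖μ‖ ^ 2 := by
    rw [norm_sub_sq (𝕜 := 𝕜), norm_smul, hx, mul_one]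
  have hre : re (inner 𝕜 v (μ • x)) ≤ ‖μ‖ * ‖inner 𝕜 v x‖ := by
    calc re (inner 𝕜 v (μ • x)) ≤ ‖inner 𝕜 v (μ • x)‖ := re_le_norm _
      _ = ‖μ‖ * ‖inner 𝕜 v x‖ := by rw [inner_smul_right, norm_mul]
  have hamgm : 2 * (‖v‖ * √(‖μ‖ ^ 2 - r ^ 2)) ≤ ‖v‖ ^ 2 + (‖μ‖ ^ 2 - r ^ 2) := by
    nlinarith [sq_nonneg (‖v‖ - √(‖μ‖ ^ 2 - r ^ 2)), Real.sq_sqrt hpos]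
  nlinarith [pow_le_pow_left₀ (norm_nonneg _) hv 2]

theorem norm_le_norm_inner_div_sqrt_one_sub_sq {v x : E} {μ : 𝕜} {r : ℝ}
    (hx : ‖x‖ = 1) (hv : ‖v - μ • x‖ ≤ r) (hrμ : r < ‖μ‖) :
    ‖v‖ ≤ ‖inner 𝕜 v x‖ / √(1 - (r / ‖μ‖) ^ 2) := by
  have hμ : 0 < ‖μ‖ := ((norm_nonneg _).trans hv).trans_lt hrμ
  have hsqrt : √(1 - (r / ‖μ‖) ^ 2) = √(‖μ‖ ^ 2 - r ^ 2) / ‖μ‖ := by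
    rw [← Real.sqrt_sq hμ.le, ← Real.sqrt_div' _ (sq_nonneg _), Real.sqrt_sq hμ.le]
    congr 1
    field_simp
  have hpos : 0 < √(‖μ‖ ^ 2 - r ^ 2) :=
    Real.sqrt_pos.mpr (by nlinarith [(norm_nonneg _).trans hv])
  rw [hsqrt, div_div_eq_mul_div, le_div_iff₀ hpos, mul_comm (‖inner 𝕜 v x‖)]
  exact norm_mul_sqrt_sq_sub_sq_le_norm_mul_norm_inner hx hv

end

theorem stmt_5_general {H : Type*} [NormedAddCommGroup H] [InnerProductSpace ℂ H]
    {Ω : Type*} (k : Ω → H) (hk : ∀ l, ‖k l‖ = 1)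
    (A : H →L[ℂ] H) (μ : ℂ) (r : ℝ) (hrμ : r < ‖μ‖)
    (h : ∀ l, ‖(A - μ • ContinuousLinearMap.id ℂ H) (k l)‖ ≤ r) :
    (⨆ l, ‖A (k l)‖) ≤
      (⨆ l, ‖(inner ℂ (A (k l)) (k l) : ℂ)‖) / Real.sqrt (1 - (r / ‖μ‖) ^ 2) := by
  have hbdd : BddAbove (Set.range fun l => ‖(inner ℂ (A (k l)) (k l) : ℂ)‖) := by
    refine ⟨‖A‖, Set.forall_mem_range.mpr fun l => ?_⟩
    calc ‖(inner ℂ (A (k l)) (k l) : ℂ)‖ ≤ ‖A (k l)‖ * ‖k l‖ := norm_inner_le_norm _ _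
      _ ≤ ‖A‖ := by simpa [hk l] using A.le_opNorm (k l)
  refine Real.iSup_le (fun l => ?_)
    (div_nonneg (Real.iSup_nonneg fun _ => norm_nonneg _) (Real.sqrt_nonneg _))
  have hl : ‖A (k l) - μ • k l‖ ≤ r := by simpa using h l
  exact (norm_le_norm_inner_div_sqrt_one_sub_sq (hk l) hl hrμ).trans
    (div_le_div_of_nonneg_right (le_ciSup hbdd l) (Real.sqrt_nonneg _))

theorem stmt_5 {H : Type*} [NormedAddCommGroup H] [InnerProductSpace ℂ H] [CompleteSpace H]
    {Ω : Type*} [Nonempty Ω] (k : Ω → H) (hk : ∀ l, ‖k l‖ = 1)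
    (A : H →L[ℂ] H) (μ : ℂ) (r : ℝ) (hr : 0 < r) (hrμ : r < ‖μ‖)
    (h : ∀ l, ‖(A - μ • ContinuousLinearMap.id ℂ H) (k l)‖ ≤ r) :
    (⨆ l, ‖A (k l)‖) ≤
      (⨆ l, ‖(inner ℂ (A (k l)) (k l) : ℂ)‖) / Real.sqrt (1 - (r / ‖μ‖) ^ 2) :=
  stmt_5_general k hk A μ r hrμ h
end
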